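/- Under the p = 2 inexact adaptive regularization framework described in the context, there exists a constant C > 0 such that for every k ≥ 0: min_{1 ≤ j ≤ k+1} χ⁻(∇²f(x_j)) ≤ C · (k+1)^{−1/3}, where χ⁻(∇²f(x_j)) = sup over unit vectors d of max(0, −⟨∇²f(x_j) d, d⟩) is the negative curvature of the Hessian of f at x_j. -/

import Mathlib

/-!
A cubic Taylor bound with `L`-Lipschitz Hessian, the model decrease (b) and Young's inequality
`3 a b² ≤ a³ + 2 b³` give `f(x_{k+1}) ≤ f(x_k) + κ_D ξ_k / 6 + (L + 2 - σ_k) / 6 ‖s_k‖³`.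
Every `‖s_j‖³` enters at most `2m - 1` windows `ξ_k`, so telescoping against `f ≥ f_low`
bounds `∑ (σ_k - M) ‖s_k‖³` from above, where `M = L + 2 + κ_D (2m - 1)`. As `σ` grows by
exactly `σ_k ‖s_k‖³`, this forces both `∑ ‖s_k‖³` and `σ_k` to stay bounded. Finally
`χ⁻(∇²f(x_{j+1})) ≤ χ⁻(B_j) + L ‖s_j‖ + ‖B_j - ∇²f(x_j)‖ ≤ c ‖s_j‖ + ‖B_j - ∇²f(x_j)‖`
with `c = θ₂ sup σ + L`, and since `∑_j (‖s_j‖³ + ‖B_j - ∇²f(x_j)‖³)` is bounded by some `Q`,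
one of the first `k + 1` terms is at most `Q / (k + 1)`.
-/

open scoped InnerProductSpace
open Finset

lemma three_mul_mul_sq_le {a b : ℝ} (ha : 0 ≤ a) (hb : 0 ≤ b) :
    3 * (a * b ^ 2) ≤ a ^ 3 + 2 * b ^ 3 := by
  nlinarith [mul_nonneg (sq_nonneg (a - b)) (add_nonneg ha (mul_nonneg zero_le_two hb))]

lemma le_rpow_mul_rpow_of_pow_three_le_div {a b t : ℝ} (ha : 0 ≤ a) (hb : 0 ≤ b) (ht : 0 < t)
    (h : a ^ 3 ≤ b / t) : a ≤ b ^ (1 / 3 : ℝ) * t ^ (-(1 : ℝ) / 3) := by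
  have hthird : (1 / 3 : ℝ) = ((3 : ℕ) : ℝ)⁻¹ := by norm_num
  calc a = (a ^ 3) ^ (1 / 3 : ℝ) := by rw [hthird, Real.pow_rpow_inv_natCast ha three_ne_zero]
    _ ≤ (b / t) ^ (1 / 3 : ℝ) := by gcongr
    _ = b ^ (1 / 3 : ℝ) * t ^ (-(1 : ℝ) / 3) := by
      rw [Real.div_rpow hb ht.le, neg_div, Real.rpow_neg ht.le, div_eq_mul_inv]

lemma sub_le_sub_of_hasDerivAt_le {u v u' v' : ℝ → ℝ} (hu : ∀ t, HasDerivAt u (u' t) t)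
    (hv : ∀ t, HasDerivAt v (v' t) t) (huv : ∀ t, 0 < t → u' t ≤ v' t) {t : ℝ} (ht : 0 ≤ t) :
    u t - u 0 ≤ v t - v 0 := by
  have hmono : MonotoneOn (fun t => v t - u t) (Set.Ici 0) := by
    refine monotoneOn_of_hasDerivWithinAt_nonneg (convex_Ici 0)
      (fun t _ => ((hv t).sub (hu t)).continuousAt.continuousWithinAt)
      (fun t _ => ((hv t).sub (hu t)).hasDerivWithinAt) fun t ht => ?_
    rw [interior_Ici] at ht
    exact sub_nonneg.2 (huv t ht)
  linarith [hmono Set.self_mem_Ici ht ht]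

lemma taylor_one_le_of_deriv2_le_add_mul {φ φ' φ'' : ℝ → ℝ} {c : ℝ}
    (hφ : ∀ t, HasDerivAt φ (φ' t) t) (hφ' : ∀ t, HasDerivAt φ' (φ'' t) t)
    (hφ'' : ∀ t, 0 ≤ t → φ'' t ≤ φ'' 0 + c * t) :
    φ 1 ≤ φ 0 + φ' 0 + φ'' 0 / 2 + c / 6 := by
  have hφ'_le : ∀ t, 0 ≤ t → φ' t - φ' 0 ≤ φ'' 0 * t + c * t ^ 2 / 2 := by
    intro t ht
    have hv : ∀ t, HasDerivAt (fun t => φ'' 0 * t + c * t ^ 2 / 2) (φ'' 0 + c * t) t :=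
      fun t => (((hasDerivAt_id t).const_mul _).add
        (((hasDerivAt_pow 2 t).const_mul c).div_const 2)).congr_deriv (by push_cast; ring)
    simpa using sub_le_sub_of_hasDerivAt_le hφ' hv (fun t ht => hφ'' t ht.le) ht
  have hv : ∀ t, HasDerivAt (fun t => φ' 0 * t + φ'' 0 * t ^ 2 / 2 + c * t ^ 3 / 6)
      (φ' 0 + φ'' 0 * t + c * t ^ 2 / 2) t := fun t =>
    ((((hasDerivAt_id t).const_mul _).add
      (((hasDerivAt_pow 2 t).const_mul _).div_const 2)).add
      (((hasDerivAt_pow 3 t).const_mul c).div_const 6)).congr_deriv (by push_cast; ring)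
  have := sub_le_sub_of_hasDerivAt_le hφ hv (fun t ht => by linarith [hφ'_le t ht.le])
    zero_le_one
  norm_num at this
  linarith

section InnerProductSpace

variable {E : Type*} [NormedAddCommGroup E] [InnerProductSpace ℝ E]

lemma real_inner_apply_self_le (T : E →L[ℝ] E) (d : E) : ⟪T d, d⟫_ℝ ≤ ‖T‖ * ‖d‖ ^ 2 :=
  calc ⟪T d, d⟫_ℝ ≤ ‖T d‖ * ‖d‖ := real_inner_le_norm _ _
    _ ≤ ‖T‖ * ‖d‖ * ‖d‖ := by gcongr; exact T.le_opNorm d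
    _ = ‖T‖ * ‖d‖ ^ 2 := by ring

lemma le_taylor_of_lipschitz_hessian [CompleteSpace E] {f : E → ℝ} (hf : ContDiff ℝ (2 : ℕ∞) f)
    {H : E → E →L[ℝ] E} (hH : ∀ x u v, ⟪H x u, v⟫_ℝ = iteratedFDeriv ℝ 2 f x ![u, v])
    {L : ℝ} (hLip : ∀ x y, ‖H x - H y‖ ≤ L * ‖x - y‖) (x s : E) :
    f (x + s) ≤ f x + ⟪gradient f x, s⟫_ℝ + 1 / 2 * ⟪H x s, s⟫_ℝ + L / 6 * ‖s‖ ^ 3 := by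
  have hdf : Differentiable ℝ f := hf.differentiable (by norm_num)
  have hdf' : Differentiable ℝ (fderiv ℝ f) :=
    (hf.fderiv_right (m := 1) (by norm_num)).differentiable one_ne_zero
  have hline : ∀ t : ℝ, HasDerivAt (fun t : ℝ => x + t • s) s t := fun t => by
    simpa using ((hasDerivAt_id t).smul_const s).const_add x
  have hH2 : ∀ y u v, fderiv ℝ (fderiv ℝ f) y u v = ⟪H y u, v⟫_ℝ := fun y u v => by
    simp [hH, iteratedFDeriv_two_apply]
  have htaylor := taylor_one_le_of_deriv2_le_add_mul (φ := fun t => f (x + t • s))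
    (φ' := fun t => fderiv ℝ f (x + t • s) s) (φ'' := fun t => ⟪H (x + t • s) s, s⟫_ℝ)
    (c := L * ‖s‖ ^ 3) (fun t => (hdf _).hasFDerivAt.comp_hasDerivAt t (hline t))
    (fun t => by
      simpa [hH2] using ((hdf' _).hasFDerivAt.comp_hasDerivAt t (hline t)).clm_apply
        (hasDerivAt_const t s))
    (fun t ht => by
      have hdiff := real_inner_apply_self_le (H (x + t • s) - H x) s
      have hLt : ‖H (x + t • s) - H x‖ ≤ L * (t * ‖s‖) := by
        simpa [norm_smul, abs_of_nonneg ht] using hLip (x + t • s) x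
      simp only [sub_apply, inner_sub_left, zero_smul, add_zero] at hdiff ⊢
      nlinarith [mul_le_mul_of_nonneg_right hLt (sq_nonneg ‖s‖)])
  simp only [one_smul, zero_smul, add_zero] at htaylor
  rw [gradient, InnerProductSpace.toDual_symm_apply]
  linarith

lemma apply_add_le_of_model_decrease [CompleteSpace E] {f : E → ℝ} (hf : ContDiff ℝ (2 : ℕ∞) f)
    {H : E → E →L[ℝ] E} (hH : ∀ x u v, ⟪H x u, v⟫_ℝ = iteratedFDeriv ℝ 2 f x ![u, v])
    {L : ℝ} (hLip : ∀ x y, ‖H x - H y‖ ≤ L * ‖x - y‖) {x s : E} {B : E →L[ℝ] E}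
    {σ e : ℝ} (hB : ‖B - H x‖ ^ 3 ≤ e)
    (hdec : ⟪gradient f x, s⟫_ℝ + 1 / 2 * ⟪B s, s⟫_ℝ + σ / 6 * ‖s‖ ^ 3 ≤ 0) :
    f (x + s) ≤ f x + e / 6 + (L + 2 - σ) / 6 * ‖s‖ ^ 3 := by
  have htaylor := le_taylor_of_lipschitz_hessian hf hH hLip x s
  have hHB : ⟪H x s, s⟫_ℝ ≤ ⟪B s, s⟫_ℝ + ‖B - H x‖ * ‖s‖ ^ 2 := by
    have := real_inner_apply_self_le (H x - B) s
    rw [sub_apply, inner_sub_left, norm_sub_rev] at this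
    linarith
  have hyoung := three_mul_mul_sq_le (norm_nonneg (B - H x)) (norm_nonneg s)
  linarith

/-- The paper's `χ⁻(A)`. -/
noncomputable def negCurvature (A : E →L[ℝ] E) : ℝ :=
  sSup {r : ℝ | ∃ d : E, ‖d‖ = 1 ∧ r = max 0 (-⟪A d, d⟫_ℝ)}

lemma le_negCurvature (A : E →L[ℝ] E) {d : E} (hd : ‖d‖ = 1) :
    max 0 (-⟪A d, d⟫_ℝ) ≤ negCurvature A := by
  refine le_csSup ⟨‖A‖, ?_⟩ ⟨d, hd, rfl⟩
  rintro r ⟨d, hd, rfl⟩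
  have := real_inner_apply_self_le (-A) d
  rw [neg_apply, inner_neg_left, norm_neg, hd] at this
  exact max_le (norm_nonneg A) (by linarith)

lemma negCurvature_nonneg (A : E →L[ℝ] E) : 0 ≤ negCurvature A :=
  Real.sSup_nonneg fun _ ⟨_, _, hr⟩ => hr ▸ le_max_left _ _

lemma negCurvature_le_add_norm_sub (A B : E →L[ℝ] E) :
    negCurvature A ≤ negCurvature B + ‖A - B‖ := by
  refine Real.sSup_le ?_ (add_nonneg (negCurvature_nonneg B) (norm_nonneg _))
  rintro r ⟨d, hd, rfl⟩
  have hB := le_negCurvature B hd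
  have hAB := real_inner_apply_self_le (B - A) d
  rw [sub_apply, inner_sub_left, norm_sub_rev, hd] at hAB
  exact max_le (add_nonneg (negCurvature_nonneg B) (norm_nonneg _))
    (by linarith [le_max_right 0 (-⟪B d, d⟫_ℝ)])

lemma negCurvature_le_of_lipschitz {H : E → E →L[ℝ] E} {L : ℝ}
    (hLip : ∀ x y, ‖H x - H y‖ ≤ L * ‖x - y‖) (x s : E) (B : E →L[ℝ] E) :
    negCurvature (H (x + s)) ≤ negCurvature B + L * ‖s‖ + ‖B - H x‖ := by
  have hHB : ‖H (x + s) - B‖ ≤ ‖H (x + s) - H x‖ + ‖H x - B‖ :=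
    norm_sub_le_norm_sub_add_norm_sub _ _ _
  have hL := hLip (x + s) x
  rw [add_sub_cancel_left] at hL
  rw [norm_sub_rev (H x)] at hHB
  linarith [negCurvature_le_add_norm_sub (H (x + s)) B]

end InnerProductSpace

section Sequences

variable {σ W : ℕ → ℝ}

lemma sum_range_ite_le (hW : ∀ k, 0 ≤ W k) (i K : ℕ) :
    ∑ k ∈ range K, (if i ≤ k then W (k - i) else 1) ≤ i + ∑ k ∈ range K, W k := by
  have hnonneg : ∀ k, 0 ≤ if i ≤ k then W (k - i) else 1 := fun k => by
    split_ifs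
    exacts [hW _, zero_le_one]
  calc ∑ k ∈ range K, (if i ≤ k then W (k - i) else 1)
      ≤ ∑ k ∈ range (i + K), (if i ≤ k then W (k - i) else 1) :=
        sum_le_sum_of_subset_of_nonneg (range_subset_range.2 (Nat.le_add_left K i))
          fun k _ _ => hnonneg k
    _ = i + ∑ k ∈ range K, W k := by
      rw [sum_range_add]
      congr 1
      · rw [sum_congr rfl fun k hk => if_neg (not_le.2 (mem_range.1 hk))]
        simp
      · simp

lemma sum_window_le (hW : ∀ k, 0 ≤ W k) (p K : ℕ) :
    ∑ k ∈ range K, ∑ i ∈ Icc 1 p, (if i ≤ k then W (k - i) else 1)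
      ≤ p ^ 2 + p * ∑ k ∈ range K, W k := by
  rw [sum_comm]
  calc ∑ i ∈ Icc 1 p, ∑ k ∈ range K, (if i ≤ k then W (k - i) else 1)
      ≤ ∑ i ∈ Icc 1 p, ((p : ℝ) + ∑ k ∈ range K, W k) :=
        sum_le_sum fun i hi => (sum_range_ite_le hW i K).trans (by
          gcongr
          exact_mod_cast (mem_Icc.1 hi).2)
    _ = p ^ 2 + p * ∑ k ∈ range K, W k := by
      simp
      ring

lemma sum_sub_mul_le_of_descent {F ξ : ℕ → ℝ} {Flow κ L p : ℝ} (hκ : 0 ≤ κ)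
    (hstep : ∀ k, F (k + 1) ≤ F k + κ * ξ k / 6 + (L + 2 - σ k) / 6 * W k)
    (hlow : ∀ k, Flow ≤ F k)
    (hξ : ∀ K, ∑ k ∈ range K, ξ k ≤ p ^ 2 + p * ∑ k ∈ range K, W k) (K : ℕ) :
    ∑ k ∈ range K, (σ k - (L + 2 + κ * p)) * W k ≤ 6 * (F 0 - Flow) + κ * p ^ 2 := by
  have htel : ∀ K, ∑ k ∈ range K, (σ k - (L + 2)) * W k
      ≤ 6 * (F 0 - F K) + κ * ∑ k ∈ range K, ξ k := by
    intro K
    induction K with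
    | zero => simp
    | succ K ih =>
      rw [sum_range_succ, sum_range_succ]
      linarith [hstep K]
  have hsplit : ∑ k ∈ range K, (σ k - (L + 2 + κ * p)) * W k
      = ∑ k ∈ range K, (σ k - (L + 2)) * W k - κ * p * ∑ k ∈ range K, W k := by
    rw [mul_sum, ← sum_sub_distrib]
    exact sum_congr rfl fun _ _ => by ring
  rw [hsplit]
  nlinarith [htel K, hlow K, mul_le_mul_of_nonneg_left (hξ K) hκ]

lemma eq_add_sum_of_succ_eq (hσ : ∀ k, σ (k + 1) = σ k + σ k * W k) (K : ℕ) :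
    σ K = σ 0 + ∑ k ∈ range K, σ k * W k := by
  induction K with
  | zero => simp
  | succ K ih => rw [sum_range_succ, hσ, ih]; ring

lemma nonneg_of_succ_eq (hσ0 : 0 ≤ σ 0) (hW : ∀ k, 0 ≤ W k)
    (hσ : ∀ k, σ (k + 1) = σ k + σ k * W k) (k : ℕ) : 0 ≤ σ k := by
  induction k with
  | zero => exact hσ0
  | succ k ih => rw [hσ]; nlinarith [hW k]

lemma monotone_of_succ_eq (hσ0 : 0 ≤ σ 0) (hW : ∀ k, 0 ≤ W k)
    (hσ : ∀ k, σ (k + 1) = σ k + σ k * W k) : Monotone σ :=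
  monotone_nat_of_le_succ fun k => by
    rw [hσ]
    nlinarith [hW k, nonneg_of_succ_eq hσ0 hW hσ k]

/-- Once `σ` exceeds `2 M`, each term of `∑ (σ k - M) * W k` dominates `M * W k`. -/
lemma exists_sum_le_of_sum_sub_mul_le {M E : ℝ} (hσ0 : 0 < σ 0) (hW : ∀ k, 0 ≤ W k)
    (hσ : ∀ k, σ (k + 1) = σ k + σ k * W k) (hM : 0 < M)
    (h : ∀ K, ∑ k ∈ range K, (σ k - M) * W k ≤ E) : ∃ S, ∀ K, ∑ k ∈ range K, W k ≤ S := by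
  have hnonneg := nonneg_of_succ_eq hσ0.le hW hσ
  have hmono := monotone_of_succ_eq hσ0.le hW hσ
  by_cases hbdd : ∀ k, σ k ≤ 2 * M
  · refine ⟨2 * M / σ 0, fun K => ?_⟩
    rw [le_div_iff₀ hσ0, sum_mul]
    calc ∑ k ∈ range K, W k * σ 0 ≤ ∑ k ∈ range K, σ k * W k :=
          sum_le_sum fun k _ => by nlinarith [hW k, hmono (Nat.zero_le k)]
      _ = σ K - σ 0 := by rw [eq_add_sum_of_succ_eq hσ K]; ring
      _ ≤ 2 * M := by linarith [hbdd K]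
  · push Not at hbdd
    obtain ⟨k₀, hk₀⟩ := hbdd
    refine ⟨(E + 2 * M * ∑ k ∈ range k₀, W k) / M, fun K => ?_⟩
    have hterm : ∀ k, M * W k - 2 * M * (if k < k₀ then W k else 0) ≤ (σ k - M) * W k := by
      intro k
      split_ifs with hk
      · nlinarith [hW k, hnonneg k]
      · nlinarith [hW k, hk₀.le.trans (hmono (not_lt.1 hk))]
    have hhead : ∑ k ∈ range K, (if k < k₀ then W k else 0) ≤ ∑ k ∈ range k₀, W k := by
      rw [← sum_filter]
      refine sum_le_sum_of_subset_of_nonneg (fun k hk => ?_) fun k _ _ => hW k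
      simp only [mem_filter, mem_range] at hk ⊢
      exact hk.2
    have hsum := (sum_le_sum fun k _ => hterm k).trans (h K)
    rw [sum_sub_distrib, ← mul_sum, ← mul_sum] at hsum
    rw [le_div_iff₀ hM]
    nlinarith [mul_le_mul_of_nonneg_left hhead (by linarith : 0 ≤ 2 * M)]

lemma le_of_sum_sub_mul_le {M E S : ℝ} (hσ : ∀ k, σ (k + 1) = σ k + σ k * W k) (hM : 0 ≤ M)
    (h : ∀ K, ∑ k ∈ range K, (σ k - M) * W k ≤ E) (hS : ∀ K, ∑ k ∈ range K, W k ≤ S)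
    (K : ℕ) : σ K ≤ σ 0 + E + M * S := by
  have hsplit : ∑ k ∈ range K, σ k * W k
      = ∑ k ∈ range K, (σ k - M) * W k + M * ∑ k ∈ range K, W k := by
    rw [mul_sum, ← sum_add_distrib]
    exact sum_congr rfl fun _ _ => by ring
  rw [eq_add_sum_of_succ_eq hσ K, hsplit]
  nlinarith [h K, mul_le_mul_of_nonneg_left (hS K) hM]

end Sequences

/-- Pigeonhole: some `j ≤ k` has `u j ^ 3 + v j ^ 3 ≤ (Q + 1) / (k + 1)`. -/
lemma exists_inf'_le_mul_rpow {a u v : ℕ → ℝ} {c Q : ℝ} (hc : 0 ≤ c)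
    (hu : ∀ j, 0 ≤ u j) (hv : ∀ j, 0 ≤ v j) (ha : ∀ j, a (j + 1) ≤ c * u j + v j)
    (hsum : ∀ K, ∑ j ∈ range K, (u j ^ 3 + v j ^ 3) ≤ Q) :
    ∃ C : ℝ, 0 < C ∧ ∀ k : ℕ,
      (Icc 1 (k + 1)).inf' (nonempty_Icc.mpr (Nat.le_add_left 1 k)) a ≤
        C * ((k : ℝ) + 1) ^ (-(1 : ℝ) / 3) := by
  have hQ : 0 < Q + 1 := by linarith [sum_range_zero (fun j => u j ^ 3 + v j ^ 3) ▸ hsum 0]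
  refine ⟨(c + 1) * (Q + 1) ^ (1 / 3 : ℝ), by positivity, fun k => ?_⟩
  have hk : (0 : ℝ) < k + 1 := by positivity
  obtain ⟨j, hj, hjQ⟩ : ∃ j ∈ range (k + 1), u j ^ 3 + v j ^ 3 ≤ (Q + 1) / (k + 1) := by
    refine exists_le_of_sum_le nonempty_range_add_one ?_
    rw [sum_const, card_range, nsmul_eq_mul, Nat.cast_succ, mul_div_cancel₀ _ hk.ne']
    linarith [hsum (k + 1)]
  have huj := le_rpow_mul_rpow_of_pow_three_le_div (hu j) hQ.le hk
    (by linarith [pow_nonneg (hv j) 3])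
  have hvj := le_rpow_mul_rpow_of_pow_three_le_div (hv j) hQ.le hk
    (by linarith [pow_nonneg (hu j) 3])
  have hjk : j + 1 ∈ Icc 1 (k + 1) := mem_Icc.2 ⟨Nat.le_add_left 1 j, by simpa using hj⟩
  calc (Icc 1 (k + 1)).inf' _ a ≤ a (j + 1) := inf'_le a hjk
    _ ≤ c * u j + v j := ha j
    _ ≤ c * ((Q + 1) ^ (1 / 3 : ℝ) * ((k : ℝ) + 1) ^ (-(1 : ℝ) / 3))
        + (Q + 1) ^ (1 / 3 : ℝ) * ((k : ℝ) + 1) ^ (-(1 : ℝ) / 3) := by gcongr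
    _ = (c + 1) * (Q + 1) ^ (1 / 3 : ℝ) * ((k : ℝ) + 1) ^ (-(1 : ℝ) / 3) := by ring

theorem stmt_18_general (n m : ℕ)
    (f : EuclideanSpace ℝ (Fin n) → ℝ)
    (hf : ContDiff ℝ (2 : ℕ∞) f)
    (H : EuclideanSpace ℝ (Fin n) → (EuclideanSpace ℝ (Fin n) →L[ℝ] EuclideanSpace ℝ (Fin n)))
    (hH : ∀ (x u v : EuclideanSpace ℝ (Fin n)), ⟪H x u, v⟫_ℝ = iteratedFDeriv ℝ 2 f x ![u, v])
    (f_low : ℝ) (hflow : ∀ x, f_low ≤ f x)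
    (L : ℝ) (hL : 3 ≤ L)
    (hLip : ∀ x y, ‖H x - H y‖ ≤ L * ‖x - y‖)
    (σ₀ θ₂ κD : ℝ) (hσ₀ : 0 < σ₀) (hθ₂ : 1 < θ₂) (hκD : 0 ≤ κD)
    (x s : ℕ → EuclideanSpace ℝ (Fin n))
    (B : ℕ → (EuclideanSpace ℝ (Fin n) →L[ℝ] EuclideanSpace ℝ (Fin n)))
    (σ : ℕ → ℝ) (hσ0 : σ 0 = σ₀)
    (hx : ∀ k, x (k + 1) = x k + s k)
    (hσrec : ∀ k, σ (k + 1) = σ k + σ k * ‖s k‖ ^ 3)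
    (ξ : ℕ → ℝ)
    (hξ : ∀ k, ξ k = ∑ i ∈ Finset.Icc 1 (2 * m - 1),
      if i ≤ k then ‖s (k - i)‖ ^ 3 else 1)
    (chi : (EuclideanSpace ℝ (Fin n) →L[ℝ] EuclideanSpace ℝ (Fin n)) → ℝ)
    (hchi : ∀ A, chi A =
      sSup {r : ℝ | ∃ d : EuclideanSpace ℝ (Fin n), ‖d‖ = 1 ∧ r = max 0 (-⟪A d, d⟫_ℝ)})
    (ha : ∀ k, ‖B k - H (x k)‖ ^ 3 ≤ κD * ξ k)
    (hb : ∀ k, ⟪gradient f (x k), s k⟫_ℝ + (1 / 2) * ⟪B k (s k), s k⟫_ℝ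
        + (σ k / 6) * ‖s k‖ ^ 3 ≤ 0)
    (hd : ∀ k, chi (B k) ≤ θ₂ * σ k * ‖s k‖) :
    ∃ C : ℝ, 0 < C ∧ ∀ k : ℕ,
      (Finset.Icc 1 (k + 1)).inf' (Finset.nonempty_Icc.mpr (Nat.le_add_left 1 k))
          (fun j => chi (H (x j))) ≤
        C * ((k : ℝ) + 1) ^ (-(1 : ℝ) / 3) := by
  obtain rfl : chi = negCurvature := funext hchi
  set p : ℝ := ((2 * m - 1 : ℕ) : ℝ)
  have hW : ∀ k, 0 ≤ ‖s k‖ ^ 3 := fun k => by positivity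
  have hξsum : ∀ K, ∑ k ∈ range K, ξ k ≤ p ^ 2 + p * ∑ k ∈ range K, ‖s k‖ ^ 3 := fun K => by
    simpa only [hξ] using sum_window_le hW (2 * m - 1) K
  have hdescent := sum_sub_mul_le_of_descent (σ := σ) hκD
    (fun k => hx k ▸ apply_add_le_of_model_decrease hf hH hLip (ha k) (hb k))
    (fun k => hflow (x k)) hξsum
  obtain ⟨S, hS⟩ := exists_sum_le_of_sum_sub_mul_le (hσ0 ▸ hσ₀) hW hσrec (by positivity) hdescent
  obtain ⟨σmax, hσS⟩ : ∃ σmax, ∀ k, σ k ≤ σmax :=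
    ⟨_, le_of_sum_sub_mul_le hσrec (by positivity) hdescent hS⟩
  refine exists_inf'_le_mul_rpow (u := fun j => ‖s j‖) (v := fun j => ‖B j - H (x j)‖)
    (c := θ₂ * σmax + L) (Q := S + κD * (p ^ 2 + p * S)) (by nlinarith [hσS 0, hσ0 ▸ hσ₀])
    (fun j => norm_nonneg _) (fun j => norm_nonneg _) (fun j => ?_) (fun K => ?_)
  · calc negCurvature (H (x (j + 1)))
        ≤ negCurvature (B j) + L * ‖s j‖ + ‖B j - H (x j)‖ :=
          hx j ▸ negCurvature_le_of_lipschitz hLip _ _ _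
      _ ≤ (θ₂ * σmax + L) * ‖s j‖ + ‖B j - H (x j)‖ := by
          nlinarith [hd j, mul_le_mul_of_nonneg_right (mul_le_mul_of_nonneg_left (hσS j)
            (by linarith : 0 ≤ θ₂)) (norm_nonneg (s j))]
  · rw [sum_add_distrib]
    refine add_le_add (hS K) ((sum_le_sum fun j _ => ha j).trans ?_)
    rw [← mul_sum]
    gcongr
    exact (hξsum K).trans (by gcongr; exact hS K)

/-- Negative-curvature complexity for the `p = 2` inexact adaptive regularization framework. -/
theorem stmt_18 (n m : ℕ) (hn : 1 ≤ n) (hm : 1 ≤ m)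
    (f : EuclideanSpace ℝ (Fin n) → ℝ)
    (hf : ContDiff ℝ (2 : ℕ∞) f)
    (H : EuclideanSpace ℝ (Fin n) → (EuclideanSpace ℝ (Fin n) →L[ℝ] EuclideanSpace ℝ (Fin n)))
    (hH : ∀ (x u v : EuclideanSpace ℝ (Fin n)), ⟪H x u, v⟫_ℝ = iteratedFDeriv ℝ 2 f x ![u, v])
    (hHsa : ∀ x, IsSelfAdjoint (H x))
    (f_low : ℝ) (hflow : ∀ x, f_low ≤ f x)
    (L : ℝ) (hL : 3 ≤ L)
    (hLip : ∀ x y, ‖H x - H y‖ ≤ L * ‖x - y‖)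
    (σ₀ θ₁ θ₂ κD : ℝ) (hσ₀ : 0 < σ₀) (hθ₁ : 1 < θ₁) (hθ₂ : 1 < θ₂) (hκD : 0 ≤ κD)
    (x s : ℕ → EuclideanSpace ℝ (Fin n))
    (B : ℕ → (EuclideanSpace ℝ (Fin n) →L[ℝ] EuclideanSpace ℝ (Fin n)))
    (hBsa : ∀ k, IsSelfAdjoint (B k))
    (σ : ℕ → ℝ) (hσ0 : σ 0 = σ₀)
    (hx : ∀ k, x (k + 1) = x k + s k)
    (hσrec : ∀ k, σ (k + 1) = σ k + σ k * ‖s k‖ ^ 3)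
    (ξ : ℕ → ℝ)
    (hξ : ∀ k, ξ k = ∑ i ∈ Finset.Icc 1 (2 * m - 1),
      if i ≤ k then ‖s (k - i)‖ ^ 3 else 1)
    (chi : (EuclideanSpace ℝ (Fin n) →L[ℝ] EuclideanSpace ℝ (Fin n)) → ℝ)
    (hchi : ∀ A, chi A =
      sSup {r : ℝ | ∃ d : EuclideanSpace ℝ (Fin n), ‖d‖ = 1 ∧ r = max 0 (-⟪A d, d⟫_ℝ)})
    (ha : ∀ k, ‖B k - H (x k)‖ ^ 3 ≤ κD * ξ k)
    (hb : ∀ k, ⟪gradient f (x k), s k⟫_ℝ + (1 / 2) * ⟪B k (s k), s k⟫_ℝ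
        + (σ k / 6) * ‖s k‖ ^ 3 ≤ 0)
    (hc : ∀ k, ‖gradient f (x k) + B k (s k)‖ ≤ (θ₁ * σ k / 2) * ‖s k‖ ^ 2)
    (hd : ∀ k, chi (B k) ≤ θ₂ * σ k * ‖s k‖) :
    ∃ C : ℝ, 0 < C ∧ ∀ k : ℕ,
      (Finset.Icc 1 (k + 1)).inf' (Finset.nonempty_Icc.mpr (Nat.le_add_left 1 k))
          (fun j => chi (H (x j))) ≤
        C * ((k : ℝ) + 1) ^ (-(1 : ℝ) / 3) :=
  stmt_18_general n m f hf H hH f_low hflow L hL hLip σ₀ θ₂ κD hσ₀ hθ₂ hκD x s B σ hσ0 hx hσrec ξ hξ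
    chi hchi ha hb hd
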